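/- arXiv:math/0403394 — 6 statements merged into one kernel-verified Lean document; each statement's English description precedes it below -/
import Mathlib

section
/- Let α : C ⥤ D be an equivalence of small categories such that for every object X of C and every object Y of D with α(X) ≅ Y, the isomorphism class [X] in C and the isomorphism class [Y] in D have equal cardinality. Then α is naturally isomorphic to an isomorphism of categories C ⥤ D. -/
open CategoryTheory

namespace Stmt5Aux

variable {C : Type*} {D : Type*} [SmallCategory C] [SmallCategory D]

/-- Isomorphism setoid on a category. -/
def isoSetoid (C : Type*) [SmallCategory C] : Setoid C :=
  ⟨fun X Y => Nonempty (X ≅ Y),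
   ⟨fun X => ⟨Iso.refl X⟩, fun ⟨e⟩ => ⟨e.symm⟩, fun ⟨e⟩ ⟨f⟩ => ⟨e.trans f⟩⟩⟩

noncomputable def objEquiv (α : C ⥤ D) (hα : α.IsEquivalence)
    (hcard : ∀ (X : C) (Y : D), Nonempty (α.obj X ≅ Y) →
      Nonempty ({A : C // Nonempty (A ≅ X)} ≃ {B : D // Nonempty (B ≅ Y)})) :
    {E : C ≃ D // ∀ X, Nonempty (α.obj X ≅ E X)} := by
  classical
  letI sC := isoSetoid C
  letI sD := isoSetoid D
  letI : α.IsEquivalence := hα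
  -- the induced equivalence of quotients
  let qmap : Quotient sC ≃ Quotient sD :=
    { toFun := Quotient.map α.obj (fun X Y ⟨e⟩ => ⟨α.mapIso e⟩)
      invFun := Quotient.map α.asEquivalence.inverse.obj
        (fun X Y ⟨e⟩ => ⟨α.asEquivalence.inverse.mapIso e⟩)
      left_inv := by
        intro t
        induction t using Quotient.ind with
        | _ X => exact Quotient.sound ⟨(α.asEquivalence.unitIso.app X).symm⟩
      right_inv := by
        intro t
        induction t using Quotient.ind with
        | _ Y => exact Quotient.sound ⟨α.asEquivalence.counitIso.app Y⟩ }
  have hqmap : ∀ X : C, qmap (Quotient.mk sC X) = Quotient.mk sD (α.obj X) :=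
    fun X => rfl
  -- per-class equivalences
  have key : ∀ t : Quotient sC,
      {A : C // Quotient.mk sC A = t} ≃ {B : D // Quotient.mk sD B = qmap t} := by
    intro t
    have hq : Quotient.mk sD (α.obj t.out) = qmap t :=
      (hqmap t.out).symm.trans (congrArg qmap (Quotient.out_eq t))
    refine (Equiv.subtypeEquivRight (fun A => ?_)).trans
      (((hcard t.out (α.obj t.out) ⟨Iso.refl _⟩).some).trans
        (Equiv.subtypeEquivRight (fun B => ?_)))
    · exact ⟨fun h => Quotient.mk_eq_iff_out.mp h, fun h => Quotient.mk_eq_iff_out.mpr h⟩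
    · rw [← hq]
      exact ⟨fun h => Quotient.sound h, fun h => Quotient.exact h⟩
  let E : C ≃ D :=
    (Equiv.sigmaFiberEquiv (Quotient.mk sC)).symm.trans
      ((Equiv.sigmaCongr qmap key).trans (Equiv.sigmaFiberEquiv (Quotient.mk sD)))
  refine ⟨E, fun X => ?_⟩
  have hEX : E X = (key (Quotient.mk sC X) ⟨X, rfl⟩).val := rfl
  have hprop := (key (Quotient.mk sC X) ⟨X, rfl⟩).property
  rw [← hEX, hqmap X] at hprop
  obtain ⟨e⟩ := Quotient.exact hprop
  exact ⟨e.symm⟩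

end Stmt5Aux

theorem stmt_5 {C : Type*} {D : Type*} [SmallCategory C] [SmallCategory D]
    (α : C ⥤ D) (hα : α.IsEquivalence)
    (hcard : ∀ (X : C) (Y : D), Nonempty (α.obj X ≅ Y) →
      Nonempty ({A : C // Nonempty (A ≅ X)} ≃ {B : D // Nonempty (B ≅ Y)})) :
    ∃ φ : C ⥤ D, (∃ ψ : D ⥤ C, φ ⋙ ψ = 𝟭 C ∧ ψ ⋙ φ = 𝟭 D) ∧ Nonempty (α ≅ φ) := by
  classical
  obtain ⟨E, hE⟩ := Stmt5Aux.objEquiv α hα hcard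
  let i : ∀ X : C, α.obj X ≅ E X := fun X => (hE X).some
  let φ : C ⥤ D :=
    { obj := E
      map := fun {X Y} f => (i X).inv ≫ α.map f ≫ (i Y).hom
      map_id := by intros; simp
      map_comp := by intros; simp }
  have hiso : α ≅ φ := NatIso.ofComponents i (by intros; simp [φ])
  letI : α.IsEquivalence := hα
  haveI : φ.IsEquivalence := Functor.isEquivalence_of_iso hiso
  let ψ : D ⥤ C :=
    { obj := E.symm
      map := fun {Y Y'} g => φ.preimage
        (eqToHom (E.apply_symm_apply Y) ≫ g ≫ eqToHom (E.apply_symm_apply Y').symm)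
      map_id := by
        intro Y
        apply φ.map_injective
        rw [Functor.map_preimage]
        simp
      map_comp := by
        intro Y Y' Y'' g g'
        apply φ.map_injective
        rw [Functor.map_comp, Functor.map_preimage, Functor.map_preimage,
          Functor.map_preimage]
        simp only [Category.assoc, eqToHom_trans_assoc, eqToHom_refl, Category.id_comp] }
  refine ⟨φ, ⟨ψ, ?_, ?_⟩, ⟨hiso⟩⟩
  · refine CategoryTheory.Functor.ext (fun X => E.symm_apply_apply X) (fun X Y f => ?_)
    apply φ.map_injective
    show φ.map (φ.preimage _) = _
    rw [Functor.map_preimage]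
    conv_rhs => rw [Functor.map_comp, Functor.map_comp, eqToHom_map φ, eqToHom_map φ,
      Functor.id_map]
  · refine CategoryTheory.Functor.ext (fun Y => E.apply_symm_apply Y) (fun Y Y' g => ?_)
    show φ.map (φ.preimage _) = _
    rw [Functor.map_preimage]
    rfl
end

section
/- Let C be a small category in which any two objects have isomorphism classes of equal cardinality. Then every autoequivalence of C is naturally isomorphic to an automorphism of C. -/
open CategoryTheory

theorem stmt_6 {C : Type*} [SmallCategory C]
    (hcard : ∀ A B : C,
      Nonempty ({X : C // Nonempty (X ≅ A)} ≃ {X : C // Nonempty (X ≅ B)})) :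
    ∀ π : C ⥤ C, π.IsEquivalence →
      ∃ F : C ⥤ C, (∃ G : C ⥤ C, F ⋙ G = 𝟭 C ∧ G ⋙ F = 𝟭 C) ∧ Nonempty (π ≅ F) := by
  intro π hπ
  classical
  letI : Setoid C := isIsomorphicSetoid C
  -- the map induced by π on isomorphism classes
  let φ : Quotient (isIsomorphicSetoid C) → Quotient (isIsomorphicSetoid C) :=
    Quotient.lift (fun X => ⟦π.obj X⟧) (fun X Y h => Quotient.sound ⟨π.mapIso h.some⟩)
  have hφbij : Function.Bijective φ := by
    constructor
    · intro q q'
      induction q using Quotient.inductionOn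
      induction q' using Quotient.inductionOn
      intro h
      exact Quotient.sound ⟨π.preimageIso (Quotient.exact h).some⟩
    · intro q
      induction q using Quotient.inductionOn with
      | h A => exact ⟨⟦π.objPreimage A⟧, Quotient.sound ⟨π.objObjPreimageIso A⟩⟩
  -- equivalence between a fiber of the quotient map and an isomorphism class
  let toClass : ∀ q : Quotient (isIsomorphicSetoid C),
      {X : C // ⟦X⟧ = q} ≃ {X : C // Nonempty (X ≅ q.out)} := fun q =>
    Equiv.subtypeEquivRight (fun X => by
      constructor
      · intro h
        exact (Quotient.exact (h.trans q.out_eq.symm))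
      · intro h
        exact (Quotient.sound h).trans q.out_eq)
  let fib : ∀ q : Quotient (isIsomorphicSetoid C),
      {X : C // ⟦X⟧ = q} ≃ {X : C // ⟦X⟧ = φ q} := fun q =>
    (toClass q).trans (((hcard q.out (φ q).out).some).trans (toClass (φ q)).symm)
  -- the bijection on objects
  let σ : C ≃ C :=
    (Equiv.sigmaFiberEquiv (fun X : C => (⟦X⟧ : Quotient (isIsomorphicSetoid C)))).symm.trans
      ((Equiv.sigmaCongr (Equiv.ofBijective φ hφbij) fib).trans
        (Equiv.sigmaFiberEquiv _))
  have hσ : ∀ X : C, (⟦σ X⟧ : Quotient (isIsomorphicSetoid C)) = ⟦π.obj X⟧ :=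
    fun X => ((fib ⟦X⟧) ⟨X, rfl⟩).prop
  -- choose isomorphisms σ X ≅ π X
  let e : ∀ X : C, σ X ≅ π.obj X := fun X => (Quotient.exact (hσ X)).some
  -- the functor F
  let F : C ⥤ C :=
    { obj := σ
      map := fun {X Y} f => (e X).hom ≫ π.map f ≫ (e Y).inv
      map_id := by intro X; simp
      map_comp := by intro X Y Z f g; simp }
  have hiso : π ≅ F := NatIso.ofComponents (fun X => (e X).symm) (by
    intro X Y f
    simp [F])
  haveI : F.IsEquivalence := Functor.isEquivalence_of_iso hiso
  -- the inverse functor G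
  let G : C ⥤ C :=
    { obj := σ.symm
      map := fun {A B} g =>
        F.preimage (eqToHom (σ.apply_symm_apply A) ≫ g ≫ eqToHom (σ.apply_symm_apply B).symm)
      map_id := by
        intro A
        apply F.map_injective
        rw [F.map_preimage]; simp
      map_comp := by
        intro A B D f g
        apply F.map_injective
        rw [Functor.map_comp, F.map_preimage, F.map_preimage, F.map_preimage]
        simp }
  refine ⟨F, ⟨G, ?_, ?_⟩, ⟨hiso⟩⟩
  · refine CategoryTheory.Functor.ext (F := F ⋙ G) (G := 𝟭 C) (fun X => σ.symm_apply_apply X) (fun X Y f => ?_)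
    apply F.map_injective
    show F.map (F.preimage _) = F.map _
    rw [F.map_preimage, Functor.map_comp, Functor.map_comp, eqToHom_map, eqToHom_map]
    simp
  · refine CategoryTheory.Functor.ext (F := G ⋙ F) (G := 𝟭 C) (fun X => σ.apply_symm_apply X) (fun X Y f => ?_)
    show F.map (F.preimage _) = _
    rw [F.map_preimage]; simp
end

section
/- Let C be a small category whose skeleton Sk has the property that every automorphism of Sk fixes all objects. Then every autoequivalence of C is naturally isomorphic to an automorphism of C, provided that additionally any automorphism of Sk sends each object X to an object whose isomorphism class in C has the same cardinality as that of X (which is automatic when objects are fixed). -/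
/-!
An autoequivalence `π` of `C` transported to the skeleton is an autoequivalence of a skeletal
category, hence bijective on objects, hence an automorphism of `Sk`; by hypothesis it fixes every
object, so `π A ≅ A` for all `A`. Rewriting `π` along these isomorphisms gives a functor isomorphic
to `π` that is the identity on objects and still fully faithful, i.e. an automorphism of `C`.
-/

open CategoryTheory

namespace CategoryTheory

variable {C D : Type*} [Category C] [Category D]

lemma Functor.isIso_of_skeletal (hC : Skeletal C) (hD : Skeletal D) (F : C ⥤ D)
    [F.IsEquivalence] : F.IsIso where
  bijective_obj :=
    ⟨fun _ _ h => hC ⟨F.preimageIso (eqToIso h)⟩,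
      fun Y => ⟨F.objPreimage Y, hD ⟨F.objObjPreimageIso Y⟩⟩⟩

instance Functor.isIso_copyObj_id (F : C ⥤ C) [F.IsEquivalence] (e : ∀ X, F.obj X ≅ X) :
    (F.copyObj id e).IsIso :=
  have := F.isEquivalence_of_iso (F.isoCopyObj id e)
  { bijective_obj := Function.bijective_id }

lemma Equivalence.nonempty_iso_of_conj_obj_eq (e : D ≌ C) (F : C ⥤ C)
    (h : ∀ X, (e.functor ⋙ F ⋙ e.inverse).obj X = X) (A : C) : Nonempty (F.obj A ≅ A) := by
  let X := e.inverse.obj A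
  have hX : e.inverse.obj (F.obj (e.functor.obj X)) = X := h X
  exact ⟨F.mapIso (e.counitIso.app A).symm ≪≫ (e.counitIso.app _).symm ≪≫
    e.functor.mapIso (eqToIso hX) ≪≫ e.counitIso.app A⟩

namespace ObjectProperty

variable (P : ObjectProperty C)

lemma skeletal_fullSubcategory (h : ∀ X Y, P X → P Y → Nonempty (X ≅ Y) → X = Y) :
    Skeletal P.FullSubcategory := fun X Y ⟨e⟩ =>
  FullSubcategory.ext (h _ _ X.property Y.property ⟨P.ι.mapIso e⟩)

lemma isEquivalence_ι (h : ∀ A, ∃ X, P X ∧ Nonempty (A ≅ X)) : P.ι.IsEquivalence where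
  essSurj.mem_essImage A :=
    have ⟨X, hX, ⟨e⟩⟩ := h A
    ⟨⟨X, hX⟩, ⟨e.symm⟩⟩

end ObjectProperty

end CategoryTheory

theorem stmt_7 {C : Type*} [SmallCategory C] (P : C → Prop)
    (hsk : ∀ A : C, ∃! B : C, P B ∧ Nonempty (A ≅ B))
    (hfix : ∀ ψ : ObjectProperty.FullSubcategory P ⥤ ObjectProperty.FullSubcategory P,
      (∃ ψ' : ObjectProperty.FullSubcategory P ⥤ ObjectProperty.FullSubcategory P,
        ψ ⋙ ψ' = 𝟭 (ObjectProperty.FullSubcategory P) ∧ ψ' ⋙ ψ = 𝟭 (ObjectProperty.FullSubcategory P)) →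
      ∀ X : ObjectProperty.FullSubcategory P, ψ.obj X = X) :
    ∀ π : C ⥤ C, π.IsEquivalence →
      ∃ F : C ⥤ C, (∃ G : C ⥤ C, F ⋙ G = 𝟭 C ∧ G ⋙ F = 𝟭 C) ∧ Nonempty (π ≅ F) := by
  intro π _
  have hSk : Skeletal (ObjectProperty.FullSubcategory P) :=
    ObjectProperty.skeletal_fullSubcategory P fun X Y hX hY e =>
      (hsk X).unique ⟨hX, ⟨Iso.refl X⟩⟩ ⟨hY, e⟩
  have := ObjectProperty.isEquivalence_ι P fun A => (hsk A).exists
  let e := (ObjectProperty.ι P).asEquivalence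
  let ψ := e.functor ⋙ π ⋙ e.inverse
  have := ψ.isIso_of_skeletal hSk hSk
  have hψ := hfix ψ ⟨ψ.strictInv, ψ.asIsomorphism.unit_eq.symm, ψ.asIsomorphism.counit_eq⟩
  have i A := (e.nonempty_iso_of_conj_obj_eq π hψ A).some
  let F := π.copyObj id i
  exact ⟨F, ⟨F.strictInv, F.asIsomorphism.unit_eq.symm, F.asIsomorphism.counit_eq⟩,
    ⟨π.isoCopyObj id i⟩⟩
end

section
/- Let E be a preorder with an automorphism φ and an element e with φ(e) ≠ e. Form E' = E ∪ {a} with a a new element, extending the preorder by a ≤ e and e ≤ a. Then the map φ' extending φ with φ'(a) = φ(e) is an equivalence from the preorder category of E' to itself that is not naturally isomorphic to any isomorphism of categories, because the isomorphism class of e has two elements {e, a} while the isomorphism class of φ(e) is a singleton. -/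
open CategoryTheory

/-- The preorder on `E' = E ∪ {a}` (with `a = none`), extending the order on `E`
by `a ≤ e` and `e ≤ a`. -/
def extLE {E : Type*} [PartialOrder E] (e : E) : Option E → Option E → Prop
  | some x, some y => x ≤ y
  | some x, none => x ≤ e
  | none, some y => e ≤ y
  | none, none => True

def extPreorder {E : Type*} [PartialOrder E] (e : E) : Preorder (Option E) where
  le := extLE e
  lt x y := extLE e x y ∧ ¬ extLE e y x
  lt_iff_le_not_ge _ _ := Iff.rfl
  le_refl x := by cases x <;> simp [extLE]
  le_trans x y z hxy hyz := by
    cases x <;> cases y <;> cases z <;>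
      simp only [extLE] at * <;> first
        | trivial
        | exact hxy
        | exact hyz
        | exact le_trans hxy hyz

/-- The map `φ'` extending `φ` with `φ'(a) = φ(e)`. -/
def extMap {E : Type*} (φ : E → E) (e : E) : Option E → Option E
  | some x => some (φ x)
  | none => some (φ e)

/-!
`φ'` is fully faithful and essentially surjective, hence an equivalence. A functor naturally
isomorphic to an isomorphism of categories `ψ` sends objects to objects isomorphic to their
`ψ`-images, and `ψ` is injective on objects. Since `φ'` identifies `a` and `e`, both `ψ a` and
`ψ e` are isomorphic to `φ e`, whose isomorphism class is `{φ e}` because `φ e ≠ e`; so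
`ψ a = ψ e`, which is impossible.
-/

theorem Monotone.functor_isEquivalence {α β : Type*} [Preorder α] [Preorder β] {f : α → β}
    (hf : Monotone f) (hle : ∀ x y, f x ≤ f y → x ≤ y) (hsurj : ∀ z, ∃ x, f x ≤ z ∧ z ≤ f x) :
    hf.functor.IsEquivalence where
  full := ⟨fun g => ⟨homOfLE (hle _ _ g.le), rfl⟩⟩
  faithful := ⟨fun _ => Subsingleton.elim _ _⟩
  essSurj := ⟨fun z =>
    ⟨(hsurj z).choose, ⟨⟨homOfLE (hsurj z).choose_spec.1, homOfLE (hsurj z).choose_spec.2,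
      rfl, rfl⟩⟩⟩⟩

namespace CategoryTheory.Functor

variable {C D : Type*} [Category C] [Category D]

theorem obj_injective_of_comp_eq_id {ψ : C ⥤ D} {ψ' : D ⥤ C} (h : ψ ⋙ ψ' = 𝟭 C) :
    Function.Injective ψ.obj :=
  Function.LeftInverse.injective (g := ψ'.obj) (congr_obj h)

theorem eq_of_iso_of_obj_injective {F ψ : C ⥤ D} (η : F ≅ ψ) (hψ : Function.Injective ψ.obj)
    {x y : C} (hxy : F.obj x = F.obj y) (hF : ∀ z, Nonempty (z ≅ F.obj x) → z = F.obj x) :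
    x = y :=
  hψ <| (hF _ ⟨(η.app x).symm⟩).trans (hF _ ⟨(η.app y).symm ≪≫ eqToIso hxy.symm⟩).symm

end CategoryTheory.Functor

section

variable {E : Type*} [PartialOrder E]

theorem extLE_extMap_iff (φ : E ↪o E) (e : E) {x y : Option E} :
    extLE e (extMap φ e x) (extMap φ e y) ↔ extLE e x y := by
  cases x <;> cases y <;> simp [extMap, extLE]

theorem exists_extLE_extMap (φ : E ≃o E) (e : E) (z : Option E) :
    ∃ x, extLE e (extMap φ e x) z ∧ extLE e z (extMap φ e x) :=
  ⟨some (φ.symm (z.getD e)), by cases z <;> simp [extMap, extLE]⟩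

theorem eq_some_of_extLE_of_extLE {e y : E} (hy : y ≠ e) {z : Option E}
    (h₁ : extLE e z (some y)) (h₂ : extLE e (some y) z) : z = some y := by
  cases z with
  | none => exact absurd (le_antisymm h₂ h₁) hy
  | some w => exact congrArg some (le_antisymm h₁ h₂)

end

theorem stmt_8 {E : Type*} [PartialOrder E] (φ : E ≃o E) (e : E) (he : φ e ≠ e) :
    letI : Preorder (Option E) := extPreorder e
    ∃ F : Option E ⥤ Option E,
      (∀ x : Option E, F.obj x = extMap φ e x) ∧
      F.IsEquivalence ∧
      ¬ ∃ ψ : Option E ⥤ Option E,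
          (∃ ψ' : Option E ⥤ Option E,
            ψ ⋙ ψ' = 𝟭 (Option E) ∧ ψ' ⋙ ψ = 𝟭 (Option E)) ∧
          Nonempty (F ≅ ψ) := by
  let _ : Preorder (Option E) := extPreorder e
  have hle (x y : Option E) : extLE e (extMap φ e x) (extMap φ e y) ↔ extLE e x y :=
    extLE_extMap_iff φ.toOrderEmbedding e
  have hmono : Monotone (extMap φ e) := fun x y => (hle x y).2
  refine ⟨hmono.functor, fun _ => rfl,
    hmono.functor_isEquivalence (fun x y => (hle x y).1) (exists_extLE_extMap φ e), ?_⟩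
  rintro ⟨ψ, ⟨ψ', hψ, -⟩, ⟨η⟩⟩
  have h : (none : Option E) = some e :=
    Functor.eq_of_iso_of_obj_injective η (Functor.obj_injective_of_comp_eq_id hψ) rfl
      fun _ ⟨i⟩ => eq_some_of_extLE_of_extLE he i.hom.le i.inv.le
  exact nomatch h
end

section
/- Let C be a category with a faithful functor Q : C ⥤ Set satisfying: for all objects A, B and every bijection u : Q(A) ≃ Q(B), there exists a unique object C' with Q(C') = Q(A) and an isomorphism u* : C' ≅ B with Q(u*) = u. Let π : C ⥤ C be an equivalence such that there is a family of bijections u_A : Q(A) ≃ Q(π(A)) natural in A (i.e., u_B ∘ Q(f) = Q(π(f)) ∘ u_A for all f : A ⟶ B). Then π is naturally isomorphic to an automorphism of C. -/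
/-!
Transporting the structure of `π A` back along `u A` yields an object `F A` with the same
underlying set as `A` and an isomorphism `F A ≅ π A` lying over `u A`; conjugating `π` by these
isomorphisms gives a functor `F ≅ π` that is the identity on underlying sets. The same
construction for a quasi-inverse of `π`, with the bijections induced by the counit, gives `G`.
By the triangle identities, `G ⋙ F` and `F ⋙ G` are isomorphic to `𝟭 C` through isomorphisms
lying over identities of underlying sets, so uniqueness of transport makes them the identity on
objects, and faithfulness of `Q` on morphisms.
-/

open CategoryTheory

universe u v w

namespace CategoryTheory

lemma types_eqToHom_apply {α β : Type w} (h : α = β) (x : α) :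
    (eqToHom h : α ⟶ β) x = cast h x := by
  subst h; rfl

lemma Functor.ext_of_comp_faithful {C D E : Type*} [Category C] [Category D] [Category E]
    {F G : C ⥤ D} (Q : D ⥤ E) [Q.Faithful] (h : F ⋙ Q = G ⋙ Q)
    (hobj : ∀ X, F.obj X = G.obj X) : F = G :=
  Functor.ext hobj fun _ _ f => Q.map_injective (by simpa [eqToHom_map] using Functor.congr_hom h f)

namespace Iso

variable {C D T : Type*} [Category C] [Category D] [Category T] {e : C ≌ D}
  {Q : C ⥤ T} {Q' : D ⥤ T}

lemma hom_app_comp_isoInverseComp_symm_hom_app (φ : Q ≅ e.functor ⋙ Q') (A : C) :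
    φ.hom.app A ≫ (isoInverseComp φ.symm).hom.app (e.functor.obj A) ≫
      Q.map (e.unitInv.app A) = 𝟙 _ := by
  have hφ : Q.map (e.unit.app A) ≫ φ.hom.app _ =
      φ.hom.app A ≫ Q'.map (e.functor.map (e.unit.app A)) :=
    φ.hom.naturality (e.unit.app A)
  have htriangle : e.counitIso.inv.app (e.functor.obj A) = e.functor.map (e.unit.app A) :=
    e.counitInv_app_functor A
  simp only [isoInverseComp_hom_app, symm_hom, Category.assoc]
  rw [htriangle, ← reassoc_of% hφ]
  simp

lemma isoInverseComp_symm_hom_app_comp_hom_app (φ : Q ≅ e.functor ⋙ Q') (B : D) :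
    (isoInverseComp φ.symm).hom.app B ≫ φ.hom.app (e.inverse.obj B) ≫
      Q'.map (e.counit.app B) = 𝟙 _ := by
  simp

end Iso

variable {C : Type u} [Category.{v} C]

def Functor.UniqueTransport (Q : C ⥤ Type w) : Prop :=
  ∀ (A B : C) (u : Q.obj A ≃ Q.obj B),
    ∃! C' : C, ∃ (h : Q.obj C' = Q.obj A) (i : C' ≅ B), Q.map i.hom = fun x => u (cast h x)

namespace Functor.UniqueTransport

variable {Q : C ⥤ Type w} (hQ : Q.UniqueTransport)

noncomputable def transport {A B : C} (e : Q.obj A ≅ Q.obj B) : C :=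
  (hQ A B e.toEquiv).exists.choose

lemma obj_transport {A B : C} (e : Q.obj A ≅ Q.obj B) : Q.obj (hQ.transport e) = Q.obj A :=
  (hQ A B e.toEquiv).exists.choose_spec.choose

noncomputable def transportIso {A B : C} (e : Q.obj A ≅ Q.obj B) : hQ.transport e ≅ B :=
  (hQ A B e.toEquiv).exists.choose_spec.choose_spec.choose

lemma map_transportIso_hom {A B : C} (e : Q.obj A ≅ Q.obj B) :
    Q.map (hQ.transportIso e).hom = eqToHom (hQ.obj_transport e) ≫ e.hom := by
  refine ConcreteCategory.hom_ext _ _ fun x => ?_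
  rw [types_comp_apply, types_eqToHom_apply]
  exact congrFun (hQ A B e.toEquiv).exists.choose_spec.choose_spec.choose_spec x

lemma map_transportIso_inv {A B : C} (e : Q.obj A ≅ Q.obj B) :
    Q.map (hQ.transportIso e).inv = e.inv ≫ eqToHom (hQ.obj_transport e).symm := by
  rw [← Functor.mapIso_inv]
  exact Iso.inv_ext (by simp [map_transportIso_hom])

lemma eq_of_map_hom_eq_eqToHom (hQ : Q.UniqueTransport) {X Y : C} (h : Q.obj X = Q.obj Y)
    (i : X ≅ Y) (hi : Q.map i.hom = eqToHom h) : X = Y :=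
  (hQ Y Y (Equiv.refl _)).unique ⟨h, i, by funext x; simp [hi, types_eqToHom_apply]⟩
    ⟨rfl, Iso.refl Y, by funext x; simp⟩

/-- `ρ A` is replaced by the structure transported to `Q A` along `φ.app A`. -/
noncomputable def strictify (ρ : C ⥤ C) (φ : Q ≅ ρ ⋙ Q) : C ⥤ C :=
  ρ.copyObj (fun A => hQ.transport (φ.app A)) (fun A => (hQ.transportIso (φ.app A)).symm)

noncomputable def strictifyIso (ρ : C ⥤ C) (φ : Q ≅ ρ ⋙ Q) : hQ.strictify ρ φ ≅ ρ :=
  (ρ.isoCopyObj _ _).symm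

lemma obj_strictify_obj (ρ : C ⥤ C) (φ : Q ≅ ρ ⋙ Q) (A : C) :
    Q.obj ((hQ.strictify ρ φ).obj A) = Q.obj A :=
  hQ.obj_transport _

lemma map_strictifyIso_hom_app (ρ : C ⥤ C) (φ : Q ≅ ρ ⋙ Q) (A : C) :
    Q.map ((hQ.strictifyIso ρ φ).hom.app A) =
      eqToHom (hQ.obj_strictify_obj ρ φ A) ≫ φ.hom.app A :=
  hQ.map_transportIso_hom _

lemma strictify_comp (ρ : C ⥤ C) (φ : Q ≅ ρ ⋙ Q) : hQ.strictify ρ φ ⋙ Q = Q := by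
  refine Functor.ext (hQ.obj_strictify_obj ρ φ) fun A B f => ?_
  have hφ : Q.map f ≫ φ.hom.app B = φ.hom.app A ≫ Q.map (ρ.map f) := φ.hom.naturality f
  simp [strictify, Functor.copyObj, map_transportIso_hom, map_transportIso_inv,
    ← reassoc_of% hφ]

lemma strictify_comp_strictify [Q.Faithful] {ρ σ : C ⥤ C} (φ : Q ≅ ρ ⋙ Q)
    (ψ : Q ≅ σ ⋙ Q) (α : ρ ⋙ σ ≅ 𝟭 C)
    (hα : ∀ A, φ.hom.app A ≫ ψ.hom.app (ρ.obj A) ≫ Q.map (α.hom.app A) = 𝟙 _) :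
    hQ.strictify ρ φ ⋙ hQ.strictify σ ψ = 𝟭 C := by
  have hcomp : (hQ.strictify ρ φ ⋙ hQ.strictify σ ψ) ⋙ Q = 𝟭 C ⋙ Q := by
    rw [Functor.assoc, strictify_comp, strictify_comp, Functor.id_comp]
  let β : hQ.strictify ρ φ ⋙ hQ.strictify σ ψ ≅ 𝟭 C :=
    isoWhiskerLeft _ (hQ.strictifyIso σ ψ) ≪≫ isoWhiskerRight (hQ.strictifyIso ρ φ) σ ≪≫ α
  refine Functor.ext_of_comp_faithful Q hcomp fun A =>
    hQ.eq_of_map_hom_eq_eqToHom (Functor.congr_obj hcomp A) (β.app A) ?_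
  have hψ : Q.map ((hQ.strictifyIso ρ φ).hom.app A) ≫ ψ.hom.app (ρ.obj A) =
      ψ.hom.app _ ≫ Q.map (σ.map ((hQ.strictifyIso ρ φ).hom.app A)) :=
    ψ.hom.naturality _
  change Q.map ((hQ.strictifyIso σ ψ).hom.app _ ≫ σ.map ((hQ.strictifyIso ρ φ).hom.app A) ≫
    α.hom.app A) = _
  rw [Q.map_comp, Q.map_comp, map_strictifyIso_hom_app, Category.assoc, ← reassoc_of% hψ,
    map_strictifyIso_hom_app, Category.assoc, hα]
  simp

end Functor.UniqueTransport

end CategoryTheory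

theorem stmt_10 {C : Type*} [Category C] (Q : C ⥤ Type*) [Q.Faithful]
    (hstar : ∀ (A B : C) (u : Q.obj A ≃ Q.obj B),
      ∃! C' : C, ∃ (h : Q.obj C' = Q.obj A) (i : C' ≅ B),
        Q.map i.hom = fun x => u (cast h x))
    (π : C ⥤ C) (hπ : π.IsEquivalence)
    (u : ∀ A : C, Q.obj A ≃ Q.obj (π.obj A))
    (hnat : ∀ (A B : C) (f : A ⟶ B) (x : Q.obj A),
      u B (Q.map f x) = Q.map (π.map f) (u A x)) :
    ∃ F : C ⥤ C, (∃ G : C ⥤ C, F ⋙ G = 𝟭 C ∧ G ⋙ F = 𝟭 C) ∧ Nonempty (π ≅ F) := by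
  have hQ : Q.UniqueTransport := hstar
  let e := π.asEquivalence
  let φ : Q ≅ π ⋙ Q := NatIso.ofComponents (fun A => (u A).toIso) fun f =>
    ConcreteCategory.hom_ext _ _ (hnat _ _ f)
  let ψ : Q ≅ e.inverse ⋙ Q := Iso.isoInverseComp (G := e) φ.symm
  refine ⟨hQ.strictify π φ, ⟨hQ.strictify e.inverse ψ, ?_, ?_⟩, ⟨(hQ.strictifyIso π φ).symm⟩⟩
  · exact hQ.strictify_comp_strictify φ ψ e.unitIso.symm
      (φ.hom_app_comp_isoInverseComp_symm_hom_app (e := e))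
  · exact hQ.strictify_comp_strictify ψ φ e.counitIso
      (φ.isoInverseComp_symm_hom_app_comp_hom_app (e := e))
end

section
/- Every equivalence π : C ⥤ C of a full subcategory C of Set that contains a one-element set and is closed under transport of structure along bijections (condition (*) holds trivially) is naturally isomorphic to an automorphism of C; moreover if additionally π fixes the isomorphism class of the singleton, π is naturally isomorphic to a functor induced by the identity on underlying sets composed with bijections. -/
/-!
The singleton `S` is terminal in `C` and corepresents the inclusion `ι : C ⥤ Type u`. An
autoequivalence `π` preserves terminal objects, so `π.obj S ≅ S`, and full faithfulness of `π`
gives `π ⋙ ι ≅ π ⋙ coyoneda.obj S ≅ coyoneda.obj (π.obj S) ≅ coyoneda.obj S ≅ ι`. Since `ι` is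
fully faithful this lifts to `π ≅ 𝟭 C`, so the automorphism may be taken to be the identity.
-/

open CategoryTheory Limits Opposite

namespace CategoryTheory

def Functor.FullyFaithful.compCoyonedaObjIso {C : Type*} [Category C] {F : C ⥤ C}
    (hF : F.FullyFaithful) {X : C} (e : F.obj X ≅ X) :
    F ⋙ coyoneda.obj (op X) ≅ coyoneda.obj (op X) :=
  isoWhiskerLeft F (coyoneda.mapIso e.op) ≪≫
    NatIso.ofComponents (fun _ => hF.homEquiv.symm.toIso) (fun f => by
      ext g
      apply hF.map_injective
      simp)

namespace ObjectProperty

variable {P : ObjectProperty (Type u)} (S : P.FullSubcategory) [Unique S.obj]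

noncomputable def isTerminalOfUnique : IsTerminal S :=
  IsTerminal.isTerminalOfObj P.ι S ((Types.isTerminalEquivUnique S.obj).symm inferInstance)

def coyonedaObjIsoι : coyoneda.obj (op S) ≅ P.ι :=
  NatIso.ofComponents
    (fun _ => (P.fullyFaithfulι.homEquiv.trans
      (TypeCat.homEquiv.trans (Equiv.funUnique S.obj _))).toIso)
    (fun _ => rfl)

noncomputable def isoIdOfIsEquivalence (π : P.FullSubcategory ⥤ P.FullSubcategory)
    [π.IsEquivalence] : π ≅ 𝟭 _ :=
  let hS := isTerminalOfUnique S
  (P.fullyFaithfulι.whiskeringRight _).preimageIso <|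
    Functor.isoWhiskerLeft π (coyonedaObjIsoι S).symm ≪≫
      (Functor.FullyFaithful.ofFullyFaithful π).compCoyonedaObjIso
        ((hS.isTerminalObj π S).uniqueUpToIso hS) ≪≫
      coyonedaObjIsoι S ≪≫ (Functor.leftUnitor _).symm

end ObjectProperty

end CategoryTheory

theorem stmt_14_general (P : Type u → Prop)
    (hsingleton : ∃ s : Type u, P s ∧ Nonempty s ∧ Subsingleton s) :
    ∀ π : ObjectProperty.FullSubcategory P ⥤ ObjectProperty.FullSubcategory P, π.IsEquivalence →
      ∃ F : ObjectProperty.FullSubcategory P ⥤ ObjectProperty.FullSubcategory P,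
        (∃ G : ObjectProperty.FullSubcategory P ⥤ ObjectProperty.FullSubcategory P,
          F ⋙ G = 𝟭 (ObjectProperty.FullSubcategory P) ∧ G ⋙ F = 𝟭 (ObjectProperty.FullSubcategory P)) ∧
        Nonempty (π ≅ F) := by
  intro π _
  obtain ⟨s, hs, ⟨x⟩, _⟩ := hsingleton
  have : Unique s := uniqueOfSubsingleton x
  exact ⟨𝟭 _, ⟨𝟭 _, rfl, rfl⟩, ⟨ObjectProperty.isoIdOfIsEquivalence ⟨s, hs⟩ π⟩⟩

theorem stmt_14 (P : Type u → Prop)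
    (hsingleton : ∃ s : Type u, P s ∧ Nonempty s ∧ Subsingleton s)
    (hclosed : ∀ X Y : Type u, P X → Nonempty (X ≃ Y) → P Y) :
    ∀ π : ObjectProperty.FullSubcategory P ⥤ ObjectProperty.FullSubcategory P, π.IsEquivalence →
      ∃ F : ObjectProperty.FullSubcategory P ⥤ ObjectProperty.FullSubcategory P,
        (∃ G : ObjectProperty.FullSubcategory P ⥤ ObjectProperty.FullSubcategory P,
          F ⋙ G = 𝟭 (ObjectProperty.FullSubcategory P) ∧ G ⋙ F = 𝟭 (ObjectProperty.FullSubcategory P)) ∧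
        Nonempty (π ≅ F) :=
  stmt_14_general P hsingleton
end
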